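/- In the sedenion algebra 𝕊, with α = e₁ + e₁₀ and β = e₇ + e₁₂, the polynomial f(x) = α x has both β and −β as roots, β and α are quadratically equivalent (same trace 0 and norm 2), but α is not a root of f. Hence a root of a polynomial over 𝕊 need be neither isolated nor spherical. -/

import Mathlib

/-- Cayley–Dickson double (with γ = -1) of an algebra with involution. -/
def CD (A : Type*) : Type _ := A × A

namespace CD

variable {A : Type*}

instance [AddCommGroup A] : AddCommGroup (CD A) := inferInstanceAs (AddCommGroup (A × A))
noncomputable instance [AddCommGroup A] [Module ℝ A] : Module ℝ (CD A) :=
  inferInstanceAs (Module ℝ (A × A))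

/-- Build an element of the double from its two halves. -/
def mk (a b : A) : CD A := (a, b)

section
set_option linter.unusedSectionVars false

/-- A star operation fixing `1`. -/
class StarOne (A : Type*) [One A] [Star A] : Prop where
  star_one : star (1 : A) = 1

variable [NonAssocRing A] [StarAddMonoid A] [StarOne A]

instance : One (CD A) := ⟨((1 : A), 0)⟩
instance : Mul (CD A) :=
  ⟨fun x y => (x.1 * y.1 - star y.2 * x.2, y.2 * x.1 + x.2 * star y.1)⟩
instance : Star (CD A) := ⟨fun x => (star x.1, -x.2)⟩

lemma mul_def (x y : CD A) :
    x * y = (x.1 * y.1 - star y.2 * x.2, y.2 * x.1 + x.2 * star y.1) := rfl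
lemma one_def : (1 : CD A) = ((1 : A), 0) := rfl
lemma star_def (x : CD A) : star x = (star x.1, -x.2) := rfl
lemma add_def (x y : CD A) : x + y = (x.1 + y.1, x.2 + y.2) := rfl
lemma zero_def : (0 : CD A) = ((0 : A), 0) := rfl

instance instNonAssocRing : NonAssocRing (CD A) where
  __ := (inferInstance : AddCommGroup (CD A))
  left_distrib a b c := by
    refine Prod.ext ?_ ?_
    · show a.1 * (b.1 + c.1) - star (b.2 + c.2) * a.2 =
        (a.1 * b.1 - star b.2 * a.2) + (a.1 * c.1 - star c.2 * a.2)
      rw [mul_add, star_add, add_mul]; abel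
    · show (b.2 + c.2) * a.1 + a.2 * star (b.1 + c.1) =
        (b.2 * a.1 + a.2 * star b.1) + (c.2 * a.1 + a.2 * star c.1)
      rw [add_mul, star_add, mul_add]; abel
  right_distrib a b c := by
    refine Prod.ext ?_ ?_
    · show (a.1 + b.1) * c.1 - star c.2 * (a.2 + b.2) =
        (a.1 * c.1 - star c.2 * a.2) + (b.1 * c.1 - star c.2 * b.2)
      rw [add_mul, mul_add]; abel
    · show c.2 * (a.1 + b.1) + (a.2 + b.2) * star c.1 =
        (c.2 * a.1 + a.2 * star c.1) + (c.2 * b.1 + b.2 * star c.1)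
      rw [mul_add, add_mul]; abel
  zero_mul a := by
    refine Prod.ext ?_ ?_
    · show (0 : A) * a.1 - star a.2 * 0 = 0; simp
    · show a.2 * 0 + 0 * star a.1 = 0; simp
  mul_zero a := by
    refine Prod.ext ?_ ?_
    · show a.1 * 0 - star (0 : A) * a.2 = 0; simp
    · show (0 : A) * a.1 + a.2 * star 0 = 0; simp
  one_mul a := by
    refine Prod.ext ?_ ?_
    · show (1 : A) * a.1 - star a.2 * 0 = a.1; simp
    · show a.2 * 1 + 0 * star a.1 = a.2; simp
  mul_one a := by
    refine Prod.ext ?_ ?_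
    · show a.1 * 1 - star (0 : A) * a.2 = a.1; simp
    · show (0 : A) * a.1 + a.2 * star 1 = a.2; simp [StarOne.star_one]

instance instStarAddMonoid : StarAddMonoid (CD A) where
  star_involutive x := Prod.ext (star_star x.1) (neg_neg x.2)
  star_add x y := Prod.ext (star_add x.1 y.1) (neg_add x.2 y.2)

instance instStarOne : StarOne (CD A) :=
  ⟨Prod.ext (StarOne.star_one) (neg_zero)⟩

end

end CD

instance : CD.StarOne ℝ := ⟨by simp⟩

/-- The real octonions, as a three-fold Cayley–Dickson double of ℝ. -/
def Octonion : Type := CD (CD (CD ℝ))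

instance : NonAssocRing Octonion := inferInstanceAs (NonAssocRing (CD (CD (CD ℝ))))
instance : StarAddMonoid Octonion := inferInstanceAs (StarAddMonoid (CD (CD (CD ℝ))))
instance : CD.StarOne Octonion := inferInstanceAs (CD.StarOne (CD (CD (CD ℝ))))
noncomputable instance : Module ℝ Octonion := inferInstanceAs (Module ℝ (CD (CD (CD ℝ))))

/-- The real sedenions, as the Cayley–Dickson double of the octonions. -/
def Sedenion : Type := CD Octonion

instance : NonAssocRing Sedenion := inferInstanceAs (NonAssocRing (CD Octonion))
instance : StarAddMonoid Sedenion := inferInstanceAs (StarAddMonoid (CD Octonion))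
instance : CD.StarOne Sedenion := inferInstanceAs (CD.StarOne (CD Octonion))
noncomputable instance : Module ℝ Sedenion := inferInstanceAs (Module ℝ (CD Octonion))

/-- Assemble a complex number, quaternion, octonion, sedenion from real coordinates. -/
def mkC (f : ℕ → ℝ) (k : ℕ) : CD ℝ := CD.mk (f k) (f (k+1))
def mkH (f : ℕ → ℝ) (k : ℕ) : CD (CD ℝ) := CD.mk (mkC f k) (mkC f (k+2))
def mkO (f : ℕ → ℝ) (k : ℕ) : Octonion := CD.mk (mkH f k) (mkH f (k+4))
def mkS (f : ℕ → ℝ) : Sedenion := CD.mk (mkO f 0) (mkO f 8)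

/-- The standard basis `e₀, …, e₁₅` of the sedenions. -/
def sE (n : ℕ) : Sedenion := mkS (fun k => if k = n then 1 else 0)

/-- The standard basis `e₀, …, e₇` of the octonions. -/
def oE (n : ℕ) : Octonion := mkO (fun k => if k = n then 1 else 0) 0

/-- Powers in a (power-associative) non-associative algebra. -/
def cdpow {A : Type*} [One A] [Mul A] (x : A) : ℕ → A
  | 0 => 1
  | n+1 => cdpow x n * x


/-!
Write a sedenion as a pair of octonions, `e_i = (e_i, 0)` and `e_{i+8} = (0, e_i)` for `i < 8`;
then `α = (e₁, e₂)` and `β = (e₇, e₄)`. For an imaginary first half `a`, the pair `(a, b)` is again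
imaginary, so `α` and `β` have trace `0`, and `(a, b)(a, b)* = (a a* + b* b, 0)` gives both norm
`1 + 1 = 2`; then `α² = -α α* = -2 ≠ 0`. The Cayley–Dickson product of two pairs of imaginary
octonions is `(a, b)(c, d) = (a c + d b, d a - b c)`, which for `α β` is
`(e₁e₇ + e₄e₂, e₄e₁ - e₂e₇) = (e₆ - e₆, -e₅ + e₅) = 0`.
-/

namespace CD

variable {A : Type*}

@[simp] lemma mk_inj {a b c d : A} : mk a b = mk c d ↔ a = c ∧ b = d := Prod.ext_iff

section AddCommGroup

variable [AddCommGroup A]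

@[simp] lemma mk_add_mk (a b c d : A) : mk a b + mk c d = mk (a + c) (b + d) := rfl
@[simp] lemma mk_sub_mk (a b c d : A) : mk a b - mk c d = mk (a - c) (b - d) := rfl
@[simp] lemma neg_mk (a b : A) : -mk a b = mk (-a) (-b) := rfl
lemma zero_eq_mk : (0 : CD A) = mk 0 0 := rfl

end AddCommGroup

variable [NonAssocRing A] [StarAddMonoid A] [StarOne A]

omit [StarOne A] in
@[simp] lemma star_mk (a b : A) : star (mk a b) = mk (star a) (-b) := rfl

omit [StarOne A] in
@[simp] lemma mk_mul_mk (a b c d : A) :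
    mk a b * mk c d = mk (a * c - star d * b) (d * a + b * star c) := rfl

omit [StarAddMonoid A] [StarOne A] in
lemma one_eq_mk : (1 : CD A) = mk 1 0 := rfl

lemma two_eq_mk : (2 : CD A) = mk 2 0 := by
  rw [← one_add_one_eq_two, one_eq_mk, mk_add_mk, one_add_one_eq_two, add_zero]

instance [NeZero (2 : A)] : NeZero (2 : CD A) :=
  ⟨by rw [two_eq_mk, zero_eq_mk, Ne, mk_inj]; exact fun h => two_ne_zero h.1⟩

omit [StarOne A] in
lemma star_mk_of_star_eq_neg {a : A} (ha : star a = -a) (b : A) : star (mk a b) = -mk a b := by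
  rw [star_mk, neg_mk, ha]

omit [StarOne A] in
lemma mk_mul_star_mk (a b : A) : mk a b * star (mk a b) = mk (a * star a + star b * b) 0 := by
  rw [star_mk, mk_mul_mk, star_neg, star_star, neg_mul, neg_mul, sub_neg_eq_add, neg_add_cancel]

lemma mk_mul_mk_eq_zero {a b c d : A} (hc : star c = -c) (hd : star d = -d)
    (h₁ : a * c + d * b = 0) (h₂ : d * a = b * c) : mk a b * mk c d = 0 := by
  rw [mk_mul_mk, hc, hd, neg_mul, sub_neg_eq_add, h₁, h₂, mul_neg, add_neg_cancel, zero_eq_mk]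

end CD

instance : NeZero (2 : Sedenion) := inferInstanceAs (NeZero (2 : CD (CD (CD (CD ℝ)))))

namespace Octonion

/-- The octonion instances are not reducible to those of `CD (CD (CD ℝ))`, so the generic
`CD` simp lemmas need these copies at the top level. -/
abbrev mk (a b : CD (CD ℝ)) : Octonion := CD.mk a b

@[simp] lemma mk_inj {a b c d : CD (CD ℝ)} : mk a b = mk c d ↔ a = c ∧ b = d := Prod.ext_iff
@[simp] lemma neg_mk (a b : CD (CD ℝ)) : -mk a b = mk (-a) (-b) := rfl
@[simp] lemma star_mk (a b : CD (CD ℝ)) : star (mk a b) = mk (star a) (-b) := rfl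
@[simp] lemma mk_mul_mk (a b c d : CD (CD ℝ)) :
    mk a b * mk c d = mk (a * c - star d * b) (d * a + b * star c) := rfl
lemma one_eq_mk : (1 : Octonion) = mk 1 0 := rfl

end Octonion

lemma star_oE {n : ℕ} (h₀ : 0 < n) (h₈ : n < 8) : star (oE n) = -oE n := by
  interval_cases n <;> simp [oE, mkO, mkH, mkC]

lemma oE_mul_self {n : ℕ} (h₀ : 0 < n) (h₈ : n < 8) : oE n * oE n = -1 := by
  interval_cases n <;> simp [oE, mkO, mkH, mkC, CD.zero_eq_mk, Octonion.one_eq_mk, CD.one_eq_mk]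

lemma oE_mul_star_oE {n : ℕ} (h₀ : 0 < n) (h₈ : n < 8) : oE n * star (oE n) = 1 := by
  rw [star_oE h₀ h₈, mul_neg, oE_mul_self h₀ h₈, neg_neg]

lemma star_oE_mul_oE {n : ℕ} (h₀ : 0 < n) (h₈ : n < 8) : star (oE n) * oE n = 1 := by
  rw [star_oE h₀ h₈, neg_mul, oE_mul_self h₀ h₈, neg_neg]

lemma oE_one_mul_oE_seven : oE 1 * oE 7 = oE 6 := by simp [oE, mkO, mkH, mkC, CD.zero_eq_mk]
lemma oE_four_mul_oE_two : oE 4 * oE 2 = -oE 6 := by simp [oE, mkO, mkH, mkC, CD.zero_eq_mk]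
lemma oE_four_mul_oE_one : oE 4 * oE 1 = -oE 5 := by simp [oE, mkO, mkH, mkC, CD.zero_eq_mk]
lemma oE_two_mul_oE_seven : oE 2 * oE 7 = -oE 5 := by simp [oE, mkO, mkH, mkC, CD.zero_eq_mk]

lemma sE_of_lt {n : ℕ} (h : n < 8) : sE n = CD.mk (oE n) 0 := by
  interval_cases n <;> rfl

lemma sE_add_eight {n : ℕ} (h : n < 8) : sE (n + 8) = CD.mk 0 (oE n) := by
  interval_cases n <;> rfl

lemma sE_add_sE_add_eight {i j : ℕ} (hi : i < 8) (hj : j < 8) :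
    sE i + sE (j + 8) = CD.mk (oE i) (oE j) := by
  rw [sE_of_lt hi, sE_add_eight hj]
  exact congrArg₂ CD.mk (add_zero _) (zero_add _)

lemma star_sE_add_sE_add_eight {i j : ℕ} (hi₀ : 0 < i) (hi : i < 8) (hj : j < 8) :
    star (sE i + sE (j + 8)) = -(sE i + sE (j + 8)) := by
  rw [sE_add_sE_add_eight hi hj]
  exact CD.star_mk_of_star_eq_neg (star_oE hi₀ hi) _

lemma sE_add_sE_add_eight_mul_star {i j : ℕ} (hi₀ : 0 < i) (hi : i < 8) (hj₀ : 0 < j)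
    (hj : j < 8) : (sE i + sE (j + 8)) * star (sE i + sE (j + 8)) = 2 := by
  rw [sE_add_sE_add_eight hi hj]
  refine (CD.mk_mul_star_mk _ _).trans ?_
  rw [oE_mul_star_oE hi₀ hi, star_oE_mul_oE hj₀ hj, one_add_one_eq_two]
  exact CD.two_eq_mk.symm

/-- In the sedenions, the polynomial `f(x) = α x` (with `α = e₁ + e₁₀`,
`β = e₇ + e₁₂`) has both `β` and `-β` as roots; `α` and `β` are quadratically equivalent
(both have trace `0` and norm `2`), yet `α` is not a root of `f`. So a root need be
neither isolated nor spherical. -/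
theorem stmt9 :
    (sE 1 + sE 10) * (sE 7 + sE 12) = 0 ∧
    (sE 1 + sE 10) * (-(sE 7 + sE 12)) = 0 ∧
    (sE 1 + sE 10) + star (sE 1 + sE 10) = 0 ∧
    (sE 7 + sE 12) + star (sE 7 + sE 12) = 0 ∧
    (sE 1 + sE 10) * star (sE 1 + sE 10) = (sE 7 + sE 12) * star (sE 7 + sE 12) ∧
    (sE 1 + sE 10) * (sE 1 + sE 10) ≠ 0 := by
  have hαβ : (sE 1 + sE 10) * (sE 7 + sE 12) = 0 := by
    rw [sE_add_sE_add_eight (i := 1) (j := 2) (by norm_num) (by norm_num),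
      sE_add_sE_add_eight (i := 7) (j := 4) (by norm_num) (by norm_num)]
    exact CD.mk_mul_mk_eq_zero (star_oE (by norm_num) (by norm_num))
      (star_oE (by norm_num) (by norm_num))
      (by rw [oE_one_mul_oE_seven, oE_four_mul_oE_two, add_neg_cancel])
      (by rw [oE_four_mul_oE_one, oE_two_mul_oE_seven])
  have hα : star (sE 1 + sE 10) = -(sE 1 + sE 10) :=
    star_sE_add_sE_add_eight (j := 2) (by norm_num) (by norm_num) (by norm_num)
  have hβ : star (sE 7 + sE 12) = -(sE 7 + sE 12) :=
    star_sE_add_sE_add_eight (j := 4) (by norm_num) (by norm_num) (by norm_num)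
  have hNα : (sE 1 + sE 10) * star (sE 1 + sE 10) = 2 :=
    sE_add_sE_add_eight_mul_star (j := 2) (by norm_num) (by norm_num) (by norm_num) (by norm_num)
  have hNβ : (sE 7 + sE 12) * star (sE 7 + sE 12) = 2 :=
    sE_add_sE_add_eight_mul_star (j := 4) (by norm_num) (by norm_num) (by norm_num) (by norm_num)
  have hα_sq : (sE 1 + sE 10) * (sE 1 + sE 10) = -2 := by
    rw [← hNα, hα, mul_neg, neg_neg]
  refine ⟨hαβ, by rw [mul_neg, hαβ, neg_zero], by rw [hα, add_neg_cancel],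
    by rw [hβ, add_neg_cancel], hNα.trans hNβ.symm, ?_⟩
  rw [hα_sq]
  exact neg_ne_zero.mpr two_ne_zero
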